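/- Let {s_a, p_A} be a representation of the labeled space (E,L,𝔅̄) in a C*-algebra such that p_C ≠ 0 for every nonempty C ∈ 𝔅̄ and such that no projection p_B, B ∈ 𝔅̄, is infinite. Suppose A ∈ 𝔅̄ admits a loop. Then there exists a loop α at A such that A = r(A,α) and L(AE^{≥1}) = {α^k α' : k ≥ 0, α' an initial segment of α}. -/

import Mathlib

/-! # Common framework for labeled graph C*-algebras

Directed graphs, finite paths, labeled spaces `(E, L, 𝔅̄)` where `𝔅̄` is the
smallest accommodating set closed under relative complements (and containing
the sink parts of its members), loops and generalized loops, representations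
of labeled spaces in C*-algebras, gauge actions, infinite projections,
AF algebras, and closed two-sided ideals. -/

noncomputable section

/-- A directed graph with vertex set `V` and edge set `E`. -/
structure DirGraph (V : Type*) (E : Type*) where
  src : E → V
  rng : E → V

variable {V E 𝒜 : Type*}

/-- A (finite) path of positive length in a directed graph: a nonempty list of
composable edges. -/
structure GPath (G : DirGraph V E) where
  edges : List E
  ne : edges ≠ []
  chain : edges.Chain' fun e f => G.rng e = G.src f

namespace GPath

variable {G : DirGraph V E}

/-- The source vertex of a path. -/
def source (p : GPath G) : V := G.src (p.edges.head p.ne)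

/-- The range vertex of a path. -/
def range (p : GPath G) : V := G.rng (p.edges.getLast p.ne)

/-- The length of a path. -/
def length (p : GPath G) : ℕ := p.edges.length

/-- The label word of a path under a labeling `L`. -/
def label (L : E → 𝒜) (p : GPath G) : List 𝒜 := p.edges.map L

end GPath

/-- The set of sinks of a graph (vertices emitting no edge). -/
def DirGraph.sinks (G : DirGraph V E) : Set V := {v | ∀ e, G.src e ≠ v}

/-- `w ∈ L*(E)`: `w` is the label of some path of positive length. -/
def IsLabelWord (G : DirGraph V E) (L : E → 𝒜) (w : List 𝒜) : Prop :=
  ∃ p : GPath G, p.label L = w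

/-- The range `r(w)` of a labeled path `w`. -/
def rngW (G : DirGraph V E) (L : E → 𝒜) (w : List 𝒜) : Set V :=
  {v | ∃ p : GPath G, p.label L = w ∧ p.range = v}

/-- The relative range `r(A, w)` of a labeled path `w` with respect to `A`. -/
def relRng (G : DirGraph V E) (L : E → 𝒜) (A : Set V) (w : List 𝒜) : Set V :=
  {v | ∃ p : GPath G, p.label L = w ∧ p.source ∈ A ∧ p.range = v}

/-- `L(A E^n)`: labels of paths of length exactly `n` with source in `A`. -/
def labelsFromLen (G : DirGraph V E) (L : E → 𝒜) (A : Set V) (n : ℕ) : Set (List 𝒜) :=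
  {w | ∃ p : GPath G, p.source ∈ A ∧ p.length = n ∧ p.label L = w}

/-- `L(A E^{≤n})`: labels of paths of length between `1` and `n` with source in `A`. -/
def labelsFromLe (G : DirGraph V E) (L : E → 𝒜) (A : Set V) (n : ℕ) : Set (List 𝒜) :=
  {w | ∃ p : GPath G, p.source ∈ A ∧ p.length ≤ n ∧ p.label L = w}

/-- `L(A E^{≥n})`: labels of paths of length at least `n` (and at least `1`)
with source in `A`. -/
def labelsFromGe (G : DirGraph V E) (L : E → 𝒜) (A : Set V) (n : ℕ) : Set (List 𝒜) :=
  {w | ∃ p : GPath G, p.source ∈ A ∧ n ≤ p.length ∧ p.label L = w}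

/-- `L(E^n A)`: labels of paths of length exactly `n` with range in `A`. -/
def labelsToLen (G : DirGraph V E) (L : E → 𝒜) (n : ℕ) (A : Set V) : Set (List 𝒜) :=
  {w | ∃ p : GPath G, p.range ∈ A ∧ p.length = n ∧ p.label L = w}

/-- `L(E^{≤l} v)`: labels of paths of length between `1` and `l` with range `v`. -/
def labelsToLe (G : DirGraph V E) (L : E → 𝒜) (l : ℕ) (v : V) : Set (List 𝒜) :=
  {w | ∃ p : GPath G, p.range = v ∧ p.length ≤ l ∧ p.label L = w}

/-- `𝔅̄`: the smallest accommodating set for `(E, L)` (containing the ranges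
`r(α)` for `α ∈ L*(E)` and closed under relative ranges, finite intersections
and finite unions) that is moreover closed under relative complements and
contains `A_sk = A ∩ sinks` for every `A` belonging to it. -/
inductive Bbar (G : DirGraph V E) (L : E → 𝒜) : Set V → Prop
  | base (w : List 𝒜) (hw : IsLabelWord G L w) : Bbar G L (rngW G L w)
  | rel (A : Set V) (w : List 𝒜) (hA : Bbar G L A) (hw : IsLabelWord G L w) :
      Bbar G L (relRng G L A w)
  | inter (A B : Set V) (hA : Bbar G L A) (hB : Bbar G L B) : Bbar G L (A ∩ B)
  | union (A B : Set V) (hA : Bbar G L A) (hB : Bbar G L B) : Bbar G L (A ∪ B)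
  | diff (A B : Set V) (hA : Bbar G L A) (hB : Bbar G L B) : Bbar G L (A \ B)
  | sk (A : Set V) (hA : Bbar G L A) : Bbar G L (A ∩ G.sinks)

/-- The standing assumptions on a labeled space `(E, L, 𝔅̄)`: weakly
left-resolving, set-finite, receiver set-finite, and no sink is a source. -/
structure StandingAssumptions (G : DirGraph V E) (L : E → 𝒜) : Prop where
  wlr : ∀ A B : Set V, Bbar G L A → Bbar G L B → ∀ w : List 𝒜, IsLabelWord G L w →
    relRng G L A w ∩ relRng G L B w = relRng G L (A ∩ B) w
  setFinite : ∀ A : Set V, Bbar G L A → ∀ n : ℕ, 1 ≤ n → (labelsFromLen G L A n).Finite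
  receiverSetFinite : ∀ A : Set V, Bbar G L A → ∀ n : ℕ, 1 ≤ n → (labelsToLen G L n A).Finite
  sinkNotSource : ∀ v ∈ G.sinks, ∃ e, G.rng e = v

/-- The `n`-fold concatenation `w^n` of a word `w`. -/
def wordPow (w : List 𝒜) (n : ℕ) : List 𝒜 := (List.replicate n w).flatten

/-- A labeled path is repeatable if all its powers `w^n`, `n ≥ 1`, are again
labeled paths. -/
def Repeatable (G : DirGraph V E) (L : E → 𝒜) (w : List 𝒜) : Prop :=
  ∀ n : ℕ, 1 ≤ n → IsLabelWord G L (wordPow w n)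

/-- The generalized vertex `[v]_l`: all non-source vertices receiving exactly
the same labeled paths of length at most `l` as `v` does. -/
def gvtx (G : DirGraph V E) (L : E → 𝒜) (l : ℕ) (v : V) : Set V :=
  {u | (∃ e, G.rng e = u) ∧ labelsToLe G L l u = labelsToLe G L l v}

/-- A generalized loop at `A`: a labeled path `α ∈ L(A E^{≥1} A)`. -/
def IsGenLoop (G : DirGraph V E) (L : E → 𝒜) (A : Set V) (α : List 𝒜) : Prop :=
  ∃ p : GPath G, p.label L = α ∧ p.source ∈ A ∧ p.range ∈ A

/-- A loop at `A`: a generalized loop `α` at `A` such that `A ⊆ r(A, α)`. -/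
def IsLoop (G : DirGraph V E) (L : E → 𝒜) (A : Set V) (α : List 𝒜) : Prop :=
  IsGenLoop G L A α ∧ A ⊆ relRng G L A α

/-- The nonempty initial segments (initial paths) of a word `α`. -/
def initialSegs (α : List 𝒜) : Set (List 𝒜) := {w | w ≠ [] ∧ w <+: α}

/-- A loop `α` at `A` has an exit if (i) the initial segments of `α` form a
proper subset of `L(A E^{≤|α|})`, or (ii) `r(A, α_{[1,i]})` contains a sink for
some `1 ≤ i ≤ |α|`, or (iii) `A` is a proper subset of `r(A, α)`. -/
def HasExitLoop (G : DirGraph V E) (L : E → 𝒜) (A : Set V) (α : List 𝒜) : Prop :=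
  initialSegs α ⊂ labelsFromLe G L A α.length ∨
  (∃ k : ℕ, 1 ≤ k ∧ k ≤ α.length ∧ (relRng G L A (α.take k) ∩ G.sinks).Nonempty) ∨
  A ⊂ relRng G L A α

/-- `A_0 E^{≤K} A_1 ⋯ E^{≤K} A_m ≠ ∅`: existence of `m` consecutively
composable paths, each of length between `1` and `K`, the `j`-th going from
`As j` to `As (j+1)`. -/
def ChainExists (G : DirGraph V E) (As : ℕ → Set V) (K m : ℕ) : Prop :=
  ∃ xs : Fin m → GPath G,
    (∀ j : Fin m, (xs j).length ≤ K ∧ (xs j).source ∈ As j.val ∧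
      (xs j).range ∈ As (j.val + 1)) ∧
    ∀ (j : ℕ) (h : j + 1 < m),
      (xs ⟨j, Nat.lt_of_succ_lt h⟩).range = (xs ⟨j + 1, h⟩).source

/-- Same as `ChainExists` but with all paths of length exactly `K`
(i.e. `A_0 E^K A_1 ⋯ E^K A_m ≠ ∅`). -/
def ChainExistsExact (G : DirGraph V E) (As : ℕ → Set V) (K m : ℕ) : Prop :=
  ∃ xs : Fin m → GPath G,
    (∀ j : Fin m, (xs j).length = K ∧ (xs j).source ∈ As j.val ∧
      (xs j).range ∈ As (j.val + 1)) ∧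
    ∀ (j : ℕ) (h : j + 1 < m),
      (xs ⟨j, Nat.lt_of_succ_lt h⟩).range = (xs ⟨j + 1, h⟩).source

/-- Condition (a): for every finite family `A_1, …, A_N` in `𝔅̄` and every
`K ≥ 1` there is `m₀ ≥ 1` such that
`A_{i_1} E^{≤K} A_{i_2} ⋯ E^{≤K} A_{i_n} = ∅` (`n` sets, `n - 1` path factors)
for all `n > m₀` and all choices of indices. -/
def CondA (G : DirGraph V E) (L : E → 𝒜) : Prop :=
  ∀ (N : ℕ) (As : Fin N → Set V), (∀ i, Bbar G L (As i)) → ∀ K : ℕ, 1 ≤ K →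
    ∃ m0 : ℕ, 1 ≤ m0 ∧ ∀ n : ℕ, m0 < n → ∀ ι : ℕ → Fin N,
      ¬ ChainExists G (fun j => As (ι j)) K (n - 1)

/-- A word is agreeable (for level `l`) if it is of the form `β^k β'` with
`β, β' ∈ L(E^{≤l})` and `β'` a nonempty initial segment of `β`. -/
def AgreeableW (G : DirGraph V E) (L : E → 𝒜) (l : ℕ) (α : List 𝒜) : Prop :=
  ∃ (k : ℕ) (β β' : List 𝒜), IsLabelWord G L β ∧ IsLabelWord G L β' ∧
    β.length ≤ l ∧ β' ≠ [] ∧ β' <+: β ∧ α = wordPow β k ++ β'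

/-- A representation of the labeled space `(E, L, 𝔅̄)` in a (C*-)algebra `B`:
projections `p A`, `A ∈ 𝔅̄`, and partial isometries `s a`, `a ∈ 𝒜`, satisfying
the defining relations of a labeled graph C*-algebra. -/
structure LRep (G : DirGraph V E) (L : E → 𝒜) (B : Type*)
    [NonUnitalRing B] [StarRing B] where
  p : Set V → B
  s : 𝒜 → B
  p_empty : p ∅ = 0
  p_sa : ∀ A : Set V, Bbar G L A → star (p A) = p A
  p_mul : ∀ A A' : Set V, Bbar G L A → Bbar G L A' → p A * p A' = p (A ∩ A')
  p_union : ∀ A A' : Set V, Bbar G L A → Bbar G L A' →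
    p (A ∪ A') = p A + p A' - p (A ∩ A')
  s_pi : ∀ a : 𝒜, s a * star (s a) * s a = s a
  p_s : ∀ (A : Set V) (a : 𝒜), Bbar G L A → p A * s a = s a * p (relRng G L A [a])
  s_s : ∀ a : 𝒜, star (s a) * s a = p (rngW G L [a])
  s_orth : ∀ a b : 𝒜, a ≠ b → star (s a) * s b = 0
  ck : ∀ A : Set V, Bbar G L A →
    p A = (∑ᶠ a ∈ {a : 𝒜 | ∃ e, G.src e ∈ A ∧ L e = a},
      s a * p (relRng G L A [a]) * star (s a)) + p (A ∩ G.sinks)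

/-- `s_α` for a word `α`: the product of the partial isometries of its letters
(junk value `0` on the empty word, which is never used). -/
def sWord {B : Type*} [NonUnitalRing B] (s : 𝒜 → B) : List 𝒜 → B
  | [] => 0
  | [a] => s a
  | a :: b :: w => s a * sWord s (b :: w)

/-- The range of a word in `L^#(E)` (`none` is the empty word, with range all
of `E^0`). -/
def owordRng (G : DirGraph V E) (L : E → 𝒜) : Option (List 𝒜) → Set V
  | none => Set.univ
  | some w => rngW G L w

/-- The relative range of a word in `L^#(E)` with respect to `A` (`none` is
the empty word, with `r(A, ε) = A`). -/
def relRngE (G : DirGraph V E) (L : E → 𝒜) (A : Set V) : Option (List 𝒜) → Set V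
  | none => A
  | some w => relRng G L A w

/-- The element `s_α p_A s_β*` of a representation, where `α`, `β` are words in
`L^#(E)` (`none` being the empty word `ε` with `s_ε` the identity). -/
def LRep.elt {B : Type*} [NonUnitalRing B] [StarRing B] {G : DirGraph V E} {L : E → 𝒜}
    (rep : LRep G L B) : Option (List 𝒜) → Set V → Option (List 𝒜) → B
  | none, A, none => rep.p A
  | some α, A, none => sWord rep.s α * rep.p A
  | none, A, some β => rep.p A * star (sWord rep.s β)
  | some α, A, some β => sWord rep.s α * rep.p A * star (sWord rep.s β)

/-- A projection `q` is infinite if there is a partial isometry `u` with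
`u* u = q`, `u u* ≤ q` and `u u* ≠ q`. -/
def IsInfiniteProjection (B : Type*) [NonUnitalRing B] [StarRing B] [PartialOrder B]
    (q : B) : Prop :=
  star q = q ∧ q * q = q ∧ ∃ u : B, star u * u = q ∧ u * star u ≤ q ∧ u * star u ≠ q

/-- A C*-algebra is AF if every finite subset can be approximated within any
`ε > 0` from a finite-dimensional *-subalgebra. -/
def IsAFAlgebra (B : Type*) [NonUnitalNormedRing B] [StarRing B] [NormedSpace ℂ B] : Prop :=
  ∀ (F : Finset B) (ε : ℝ), 0 < ε →
    ∃ D : NonUnitalStarSubalgebra ℂ B, FiniteDimensional ℂ D ∧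
      ∀ x ∈ F, ∃ y ∈ (D : Set B), ‖x - y‖ < ε

/-- A gauge action for a representation: a strongly continuous action of the
circle group by *-automorphisms fixing the projections and scaling the
generating partial isometries. -/
structure GaugeAction {B : Type*} [NonUnitalCStarAlgebra B]
    (G : DirGraph V E) (L : E → 𝒜) (rep : LRep G L B) where
  γ : Circle → B ≃⋆ₐ[ℂ] B
  γ_mul : ∀ z w : Circle, γ (z * w) = (γ w).trans (γ z)
  γ_continuous : ∀ x : B, Continuous fun z => γ z x
  γ_s : ∀ (z : Circle) (a : 𝒜), γ z (rep.s a) = (z : ℂ) • rep.s a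
  γ_p : ∀ (z : Circle) (A : Set V), Bbar G L A → γ z (rep.p A) = rep.p A

/-- The representation generates `B` as a C*-algebra. -/
def GeneratesAlg {B : Type*} [NonUnitalCStarAlgebra B]
    (G : DirGraph V E) (L : E → 𝒜) (rep : LRep G L B) : Prop :=
  closure (NonUnitalStarAlgebra.adjoin ℂ
    ({x : B | ∃ a : 𝒜, x = rep.s a} ∪ {x : B | ∃ A : Set V, Bbar G L A ∧ x = rep.p A}) : Set B)
    = Set.univ

/-- A closed two-sided ideal of a C*-algebra (as a set). -/
def IsClosedTwoSidedIdealSet (B : Type*) [NonUnitalNormedRing B] [NormedSpace ℂ B]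
    (I : Set B) : Prop :=
  IsClosed I ∧ (0 : B) ∈ I ∧ (∀ x ∈ I, ∀ y ∈ I, x + y ∈ I) ∧
    (∀ (c : ℂ), ∀ x ∈ I, c • x ∈ I) ∧ ∀ x ∈ I, ∀ y : B, x * y ∈ I ∧ y * x ∈ I

/-- The closed two-sided ideal generated by an element. -/
def closedIdealGen (B : Type*) [NonUnitalNormedRing B] [NormedSpace ℂ B] (q : B) : Set B :=
  ⋂₀ {I : Set B | IsClosedTwoSidedIdealSet B I ∧ q ∈ I}

/-! For a loop `β` at `A`, the partial isometry `s_β p_{r(A,β)}` has source projection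
`p_{r(A,β)}` and range projection `s_β p_{r(A,β)} s_β^* ≤ p_A ≤ p_{r(A,β)}`; finiteness of
`p_{r(A,β)}` forces equality, hence `r(A,β) = A`. Then `s_β p_A s_β^* = p_A`, whereas by the
Cuntz–Krieger relations a labeled path leaving `A` that diverges from `β` would contribute a further
nonzero summand below `p_A`. So the labeled paths leaving `A` of length at most `|β|` are the
initial segments of `β`, and a longer one starts with `β` and continues from `r(A,β) = A`. -/

lemma wordPow_succ (w : List 𝒜) (k : ℕ) : wordPow w (k + 1) = w ++ wordPow w k := by
  simp [wordPow, List.replicate_succ]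

lemma List.exists_eq_append_cons_of_not_prefix {c d : List 𝒜} (hcd : ¬ c <+: d)
    (hdc : ¬ d <+: c) : ∃ u a b c' d', a ≠ b ∧ c = u ++ a :: c' ∧ d = u ++ b :: d' := by
  induction c generalizing d with
  | nil => exact absurd d.nil_prefix hcd
  | cons a c ih =>
    rcases d with _ | ⟨b, d⟩
    · exact absurd List.nil_prefix hdc
    by_cases hab : a = b
    · subst hab
      simp only [List.cons_prefix_cons, true_and] at hcd hdc
      obtain ⟨u, a', b', c', d', hne, rfl, rfl⟩ := ih hcd hdc
      exact ⟨a :: u, a', b', c', d', hne, rfl, rfl⟩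
    · exact ⟨[], a, b, c, d, hab, rfl, rfl⟩

section LabeledPaths

variable {G : DirGraph V E} {L : E → 𝒜}

namespace GPath

def single (e : E) : GPath G := ⟨[e], List.cons_ne_nil e [], List.isChain_singleton e⟩

def cons (e : E) (p : GPath G) (h : G.rng e = p.source) : GPath G where
  edges := e :: p.edges
  ne := List.cons_ne_nil e p.edges
  chain := p.chain.cons (by rw [List.head?_eq_some_head p.ne]; rintro _ ⟨⟩; exact h)

end GPath

lemma relRng_mono {A A' : Set V} (h : A ⊆ A') (w : List 𝒜) :
    relRng G L A w ⊆ relRng G L A' w := fun _ ⟨p, hl, hs, hr⟩ => ⟨p, hl, h hs, hr⟩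

lemma relRng_subset_rngW (A : Set V) (w : List 𝒜) : relRng G L A w ⊆ rngW G L w :=
  fun _ ⟨p, hl, _, hr⟩ => ⟨p, hl, hr⟩

lemma relRng_cons (A : Set V) (a : 𝒜) {w : List 𝒜} (hw : w ≠ []) :
    relRng G L A (a :: w) = relRng G L (relRng G L A [a]) w := by
  ext v
  constructor
  · rintro ⟨⟨_ | ⟨e, es⟩, hne, hc⟩, hl, hs, rfl⟩
    · exact absurd rfl hne
    have hes : es ≠ [] := by rintro rfl; simp [GPath.label] at hl; exact hw hl.2
    simp only [GPath.label, List.map_cons, List.cons.injEq] at hl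
    refine ⟨⟨es, hes, hc.tail⟩, hl.2, ⟨GPath.single e, by simp [GPath.single, GPath.label, hl.1],
      hs, ?_⟩, ?_⟩
    · exact (List.isChain_cons.mp hc).1 _ (List.head?_eq_some_head hes)
    · simp [GPath.range, List.getLast_cons hes]
  · rintro ⟨q, hl, ⟨⟨_ | ⟨e, _ | ⟨f, es⟩⟩, hne, hc⟩, hpl, hps, hpr⟩, rfl⟩
    · exact absurd rfl hne
    · simp only [GPath.label, List.map_cons, List.map_nil, List.cons.injEq] at hpl
      refine ⟨GPath.cons e q hpr, ?_, hps, ?_⟩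
      · simp [GPath.cons, GPath.label, hpl.1, ← hl]
      · simp [GPath.cons, GPath.range, List.getLast_cons q.ne]
    · simp [GPath.label] at hpl

lemma relRng_empty (w : List 𝒜) : relRng G L (∅ : Set V) w = ∅ :=
  Set.eq_empty_of_forall_notMem fun _ ⟨_, _, hs, _⟩ => hs

lemma relRng_singleton_eq_empty {A : Set V} {a : 𝒜} (ha : a ∉ {x | ∃ e, G.src e ∈ A ∧ L e = x}) :
    relRng G L A [a] = ∅ := by
  refine Set.eq_empty_of_forall_notMem ?_
  rintro _ ⟨⟨_ | ⟨e, es⟩, hne, _⟩, hl, hs, _⟩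
  · exact hne rfl
  · exact ha ⟨e, hs, (List.cons.inj hl).1⟩

lemma StandingAssumptions.finite_setOf_label_src_mem (sa : StandingAssumptions G L) {A : Set V}
    (hA : Bbar G L A) : {a | ∃ e, G.src e ∈ A ∧ L e = a}.Finite := by
  refine ((sa.setFinite A hA 1 le_rfl).preimage List.singleton_injective.injOn).subset ?_
  rintro _ ⟨e, hs, rfl⟩
  exact ⟨GPath.single e, hs, rfl, rfl⟩

-- Unlike `relRng`, this assigns the empty word the range `r(A, ε) = A`.
def relRng' (G : DirGraph V E) (L : E → 𝒜) : Set V → List 𝒜 → Set V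
  | A, [] => A
  | A, a :: w => relRng' G L (relRng G L A [a]) w

lemma relRng'_cons (A : Set V) (a : 𝒜) (w : List 𝒜) :
    relRng' G L A (a :: w) = relRng' G L (relRng G L A [a]) w := rfl

lemma relRng'_append (A : Set V) (u v : List 𝒜) :
    relRng' G L A (u ++ v) = relRng' G L (relRng' G L A u) v := by
  induction u generalizing A with
  | nil => rfl
  | cons a u ih => exact ih _

lemma relRng'_eq_relRng (A : Set V) {w : List 𝒜} (hw : w ≠ []) :
    relRng' G L A w = relRng G L A w := by
  induction w generalizing A with
  | nil => exact absurd rfl hw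
  | cons a w ih =>
    rcases eq_or_ne w [] with rfl | hw'
    · rfl
    · rw [relRng'_cons, ih _ hw', relRng_cons A a hw']

lemma relRng'_mono {A A' : Set V} (h : A ⊆ A') (w : List 𝒜) :
    relRng' G L A w ⊆ relRng' G L A' w := by
  induction w generalizing A A' with
  | nil => exact h
  | cons a w ih => exact ih (relRng_mono h [a])

lemma relRng'_empty (w : List 𝒜) : relRng' G L (∅ : Set V) w = ∅ := by
  induction w with
  | nil => rfl
  | cons a w ih => rw [relRng'_cons, relRng_empty, ih]

lemma nonempty_of_nonempty_relRng' {A : Set V} {w : List 𝒜} (h : (relRng' G L A w).Nonempty) :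
    A.Nonempty :=
  Set.nonempty_iff_ne_empty.mpr fun hA => h.ne_empty (by rw [hA, relRng'_empty])

lemma bbar_relRng_singleton (hL : Function.Surjective L) {A : Set V} (hA : Bbar G L A) (a : 𝒜) :
    Bbar G L (relRng G L A [a]) := by
  obtain ⟨e, rfl⟩ := hL a
  exact Bbar.rel A _ hA ⟨GPath.single e, rfl⟩

lemma bbar_relRng' (hL : Function.Surjective L) {A : Set V} (hA : Bbar G L A) (w : List 𝒜) :
    Bbar G L (relRng' G L A w) := by
  induction w generalizing A with
  | nil => exact hA
  | cons a w ih => exact ih (bbar_relRng_singleton hL hA a)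

lemma labelsFromGe_one_eq (A : Set V) :
    labelsFromGe G L A 1 = {w | w ≠ [] ∧ (relRng' G L A w).Nonempty} := by
  ext w
  constructor
  · rintro ⟨p, hs, -, rfl⟩
    have hw : p.label L ≠ [] := by simp [GPath.label, p.ne]
    exact ⟨hw, relRng'_eq_relRng A hw ▸ ⟨p.range, p, rfl, hs, rfl⟩⟩
  · rintro ⟨hw, v, hv⟩
    obtain ⟨p, rfl, hs, -⟩ := relRng'_eq_relRng A hw ▸ hv
    exact ⟨p, hs, List.length_pos_iff.mpr p.ne, rfl⟩

lemma relRng'_wordPow {A : Set V} {β : List 𝒜} (hβ : relRng' G L A β = A) (k : ℕ) :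
    relRng' G L A (wordPow β k) = A := by
  induction k with
  | zero => rfl
  | succ k ih => rw [wordPow_succ, relRng'_append, hβ, ih]

lemma nonempty_relRng'_iff_eq_wordPow_append {A : Set V} {β : List 𝒜} (hβ : β ≠ [])
    (hAβ : relRng' G L A β = A) (hA : A.Nonempty)
    (hpref : ∀ c, c.length ≤ β.length → (relRng' G L A c).Nonempty → c <+: β) (w : List 𝒜) :
    w ≠ [] ∧ (relRng' G L A w).Nonempty ↔
      ∃ (k : ℕ) (β' : List 𝒜), β' ≠ [] ∧ β' <+: β ∧ w = wordPow β k ++ β' := by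
  constructor
  · rintro ⟨hw, hwA⟩
    induction' hn : w.length using Nat.strong_induction_on with n ih generalizing w
    rcases le_or_gt w.length β.length with hle | hlt
    · exact ⟨0, w, hw, hpref w hle hwA, rfl⟩
    have hsplit := (w.take_append_drop β.length).symm
    rw [hsplit, relRng'_append] at hwA
    have htake : w.take β.length = β :=
      (hpref _ (w.length_take_le _) (nonempty_of_nonempty_relRng' hwA)).eq_of_length
        (w.length_take_of_le hlt.le)
    rw [htake, hAβ] at hwA
    have hβpos := List.length_pos_iff.mpr hβ
    obtain ⟨k, β', hβ', hpre, hdrop⟩ := ih _ (by simp; omega) (w.drop β.length)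
      (by simp; omega) hwA rfl
    exact ⟨k + 1, β', hβ', hpre, by rw [hsplit, htake, hdrop, wordPow_succ, List.append_assoc]⟩
  · rintro ⟨k, β', hβ', ⟨r, rfl⟩, rfl⟩
    refine ⟨List.append_ne_nil_of_right_ne_nil _ hβ', ?_⟩
    rw [relRng'_append, relRng'_wordPow hAβ]
    rw [relRng'_append] at hAβ
    exact nonempty_of_nonempty_relRng' (hAβ ▸ hA)

end LabeledPaths

section WordOperators

variable {B : Type*}

-- `s_w x` and `s_w x s_w^*`; the empty word acts as the identity, which `B` need not have.
def sWordMul [Mul B] (s : 𝒜 → B) : List 𝒜 → B → B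
  | [], x => x
  | a :: w, x => s a * sWordMul s w x

def sWordConj [Mul B] [Star B] (s : 𝒜 → B) : List 𝒜 → B → B
  | [], x => x
  | a :: w, x => s a * sWordConj s w x * star (s a)

variable [NonUnitalRing B] [StarRing B] (s : 𝒜 → B)

lemma sWordMul_mul_star_sWordMul (w : List 𝒜) (x y : B) :
    sWordMul s w x * star (sWordMul s w y) = sWordConj s w (x * star y) := by
  induction w with
  | nil => rfl
  | cons a w ih => simp only [sWordMul, sWordConj, star_mul, ← ih, mul_assoc]

lemma sWordConj_append (u v : List 𝒜) (x : B) :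
    sWordConj s (u ++ v) x = sWordConj s u (sWordConj s v x) := by
  induction u with
  | nil => rfl
  | cons a u ih => simp only [List.cons_append, sWordConj, ih]

lemma sWordConj_add (w : List 𝒜) (x y : B) :
    sWordConj s w (x + y) = sWordConj s w x + sWordConj s w y := by
  induction w with
  | nil => rfl
  | cons a w ih => simp only [sWordConj, ih, mul_add, add_mul]

lemma sWordConj_zero (w : List 𝒜) : sWordConj s w 0 = 0 := by
  induction w with
  | nil => rfl
  | cons a w ih => simp only [sWordConj, ih, mul_zero, zero_mul]

variable [PartialOrder B] [StarOrderedRing B]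

lemma sWordConj_mono (w : List 𝒜) {x y : B} (h : x ≤ y) : sWordConj s w x ≤ sWordConj s w y := by
  induction w with
  | nil => exact h
  | cons a w ih => exact star_right_conjugate_le_conjugate ih (s a)

lemma sWordConj_nonneg (w : List 𝒜) {x : B} (h : 0 ≤ x) : 0 ≤ sWordConj s w x :=
  sWordConj_zero s w ▸ sWordConj_mono s w h

end WordOperators

lemma mul_star_eq_of_not_isInfiniteProjection {B : Type*} [NonUnitalRing B] [StarRing B]
    [PartialOrder B] {q u : B} (hq : ¬ IsInfiniteProjection B q) (hsa : star q = q)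
    (hidem : q * q = q) (hu : star u * u = q) (hle : u * star u ≤ q) : u * star u = q :=
  by_contra fun hne => hq ⟨hsa, hidem, u, hu, hle, hne⟩

namespace LRep

variable {G : DirGraph V E} {L : E → 𝒜} {B : Type*}

section Ring

variable [NonUnitalRing B] [StarRing B] (rep : LRep G L B)

lemma p_mul_self {A : Set V} (hA : Bbar G L A) : rep.p A * rep.p A = rep.p A := by
  rw [rep.p_mul A A hA hA, Set.inter_self]

lemma p_sub {A C : Set V} (hA : Bbar G L A) (hC : Bbar G L C) (h : A ⊆ C) :
    rep.p C - rep.p A = rep.p (C \ A) := by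
  have := rep.p_union A (C \ A) hA (Bbar.diff C A hC hA)
  rw [Set.union_sdiff_cancel h, Set.inter_sdiff_self, rep.p_empty, sub_zero] at this
  rw [this, add_sub_cancel_left]

lemma p_mul_sWordMul (hL : Function.Surjective L) {A : Set V} (hA : Bbar G L A) (w : List 𝒜)
    (x : B) : rep.p A * sWordMul rep.s w x = sWordMul rep.s w (rep.p (relRng' G L A w) * x) := by
  induction w generalizing A with
  | nil => rfl
  | cons a w ih =>
    rw [sWordMul, ← mul_assoc, rep.p_s A a hA, mul_assoc, ih (bbar_relRng_singleton hL hA a)]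
    rfl

lemma star_sWordMul_mul_sWordMul (hL : Function.Surjective L) {C D : Set V} (hC : Bbar G L C)
    (hD : Bbar G L D) (w : List 𝒜) (hCD : C ⊆ relRng' G L D w) :
    star (sWordMul rep.s w (rep.p C)) * sWordMul rep.s w (rep.p C) = rep.p C := by
  induction w generalizing D with
  | nil => rw [sWordMul, rep.p_sa C hC, rep.p_mul_self hC]
  | cons a w ih =>
    obtain ⟨e, rfl⟩ := hL a
    have ha : Bbar G L (rngW G L [L e]) := Bbar.base _ ⟨GPath.single e, rfl⟩
    have hCa : C ⊆ relRng' G L (rngW G L [L e]) w :=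
      hCD.trans (relRng'_mono (relRng_subset_rngW D _) w)
    calc star (sWordMul rep.s (L e :: w) (rep.p C)) * sWordMul rep.s (L e :: w) (rep.p C)
        = star (sWordMul rep.s w (rep.p C)) *
            (rep.p (rngW G L [L e]) * sWordMul rep.s w (rep.p C)) := by
          simp only [sWordMul, star_mul, ← rep.s_s, mul_assoc]
      _ = rep.p C := by
          rw [rep.p_mul_sWordMul hL ha, rep.p_mul _ _ (bbar_relRng' hL ha w) hC,
            Set.inter_eq_right.mpr hCa, ih (bbar_relRng_singleton hL hD _) hCD]

def cylinder (A : Set V) (w : List 𝒜) : B := sWordConj rep.s w (rep.p (relRng' G L A w))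

lemma sWordMul_p_mul_star (hL : Function.Surjective L) {A : Set V} (hA : Bbar G L A)
    (w : List 𝒜) :
    sWordMul rep.s w (rep.p (relRng' G L A w)) * star (sWordMul rep.s w (rep.p (relRng' G L A w)))
      = rep.cylinder A w := by
  have hC := bbar_relRng' hL hA w
  rw [sWordMul_mul_star_sWordMul, rep.p_sa _ hC, rep.p_mul_self hC, cylinder]

lemma cylinder_eq_p_of_not_isInfiniteProjection [PartialOrder B]
    (hL : Function.Surjective L) {A : Set V} (hA : Bbar G L A) (w : List 𝒜)
    (hfin : ¬ IsInfiniteProjection B (rep.p (relRng' G L A w)))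
    (hle : rep.cylinder A w ≤ rep.p (relRng' G L A w)) :
    rep.cylinder A w = rep.p (relRng' G L A w) := by
  have hC := bbar_relRng' hL hA w
  rw [← rep.sWordMul_p_mul_star hL hA] at hle ⊢
  exact mul_star_eq_of_not_isInfiniteProjection hfin (rep.p_sa _ hC) (rep.p_mul_self hC)
    (rep.star_sWordMul_mul_sWordMul hL hC hA w subset_rfl) hle

variable [PartialOrder B] [StarOrderedRing B]

lemma p_nonneg {A : Set V} (hA : Bbar G L A) : 0 ≤ rep.p A := by
  simpa only [rep.p_sa A hA, rep.p_mul_self hA] using star_mul_self_nonneg (rep.p A)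

lemma p_mono {A C : Set V} (hA : Bbar G L A) (hC : Bbar G L C) (h : A ⊆ C) :
    rep.p A ≤ rep.p C :=
  sub_nonneg.mp (rep.p_sub hA hC h ▸ rep.p_nonneg (Bbar.diff C A hC hA))

lemma subset_of_p_le (hp : ∀ C : Set V, Bbar G L C → C.Nonempty → rep.p C ≠ 0) {A C : Set V}
    (hA : Bbar G L A) (hC : Bbar G L C) (h : A ⊆ C) (hle : rep.p C ≤ rep.p A) : C ⊆ A := by
  have hCA : rep.p (C \ A) = 0 :=
    le_antisymm (rep.p_sub hA hC h ▸ sub_nonpos.mpr hle) (rep.p_nonneg (Bbar.diff C A hC hA))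
  exact Set.sdiff_eq_empty.mp (Set.not_nonempty_iff_eq_empty.mp
    fun hne => hp _ (Bbar.diff C A hC hA) hne hCA)

-- The summands of the Cuntz–Krieger relation at `A` are positive and vanish off the finitely
-- many letters emitted by `A`.
lemma sum_le_p (hL : Function.Surjective L) (sa : StandingAssumptions G L) {A : Set V}
    (hA : Bbar G L A) (T : Finset 𝒜) :
    ∑ a ∈ T, rep.s a * rep.p (relRng G L A [a]) * star (rep.s a) ≤ rep.p A := by
  classical
  have hS := sa.finite_setOf_label_src_mem hA
  set t : 𝒜 → B := fun a => rep.s a * rep.p (relRng G L A [a]) * star (rep.s a)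
  have ht : ∀ a, 0 ≤ t a := fun a =>
    star_right_conjugate_nonneg (rep.p_nonneg (bbar_relRng_singleton hL hA a)) _
  calc ∑ a ∈ T, t a ≤ ∑ a ∈ T ∪ hS.toFinset, t a :=
        Finset.sum_le_sum_of_subset_of_nonneg Finset.subset_union_left fun a _ _ => ht a
    _ = ∑ a ∈ hS.toFinset, t a := by
        refine (Finset.sum_subset Finset.subset_union_right fun a _ ha => ?_).symm
        rw [Set.Finite.mem_toFinset] at ha
        simp only [t, relRng_singleton_eq_empty ha, rep.p_empty, mul_zero, zero_mul]
    _ ≤ ∑ a ∈ hS.toFinset, t a + rep.p (A ∩ G.sinks) :=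
        le_add_of_nonneg_right (rep.p_nonneg (Bbar.sk A hA))
    _ = rep.p A := by rw [rep.ck A hA, finsum_mem_eq_finite_toFinset_sum _ hS]

lemma cylinder_nonneg (hL : Function.Surjective L) {A : Set V} (hA : Bbar G L A)
    (w : List 𝒜) : 0 ≤ rep.cylinder A w :=
  sWordConj_nonneg _ w (rep.p_nonneg (bbar_relRng' hL hA w))

lemma cylinder_le (hL : Function.Surjective L) (sa : StandingAssumptions G L) {A : Set V}
    (hA : Bbar G L A) (w : List 𝒜) : rep.cylinder A w ≤ rep.p A := by
  induction w generalizing A with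
  | nil => exact le_rfl
  | cons a w ih =>
    calc rep.cylinder A (a :: w)
        = rep.s a * rep.cylinder (relRng G L A [a]) w * star (rep.s a) := rfl
      _ ≤ rep.s a * rep.p (relRng G L A [a]) * star (rep.s a) :=
        star_right_conjugate_le_conjugate (ih (bbar_relRng_singleton hL hA a)) _
      _ ≤ rep.p A := by simpa using rep.sum_le_p hL sa hA {a}

lemma cylinder_append_le (hL : Function.Surjective L) (sa : StandingAssumptions G L) {A : Set V}
    (hA : Bbar G L A) (u v : List 𝒜) : rep.cylinder A (u ++ v) ≤ rep.cylinder A u := by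
  rw [cylinder, sWordConj_append, relRng'_append]
  exact sWordConj_mono _ u (rep.cylinder_le hL sa (bbar_relRng' hL hA u) v)

lemma cylinder_add_cylinder_le (hL : Function.Surjective L) (sa : StandingAssumptions G L)
    {A : Set V} (hA : Bbar G L A) {c d : List 𝒜} (hcd : ¬ c <+: d) (hdc : ¬ d <+: c) :
    rep.cylinder A c + rep.cylinder A d ≤ rep.p A := by
  classical
  obtain ⟨u, a, b, c', d', hab, rfl, rfl⟩ := List.exists_eq_append_cons_of_not_prefix hcd hdc
  have hu := bbar_relRng' hL hA u
  calc rep.cylinder A (u ++ a :: c') + rep.cylinder A (u ++ b :: d')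
      ≤ rep.cylinder A (u ++ [a]) + rep.cylinder A (u ++ [b]) := by
        rw [List.append_cons u a, List.append_cons u b]
        exact add_le_add (rep.cylinder_append_le hL sa hA _ _)
          (rep.cylinder_append_le hL sa hA _ _)
    _ = sWordConj rep.s u (∑ x ∈ {a, b},
          rep.s x * rep.p (relRng G L (relRng' G L A u) [x]) * star (rep.s x)) := by
        rw [Finset.sum_pair hab, sWordConj_add]
        simp only [cylinder, sWordConj_append, relRng'_append]
        rfl
    _ ≤ rep.cylinder A u := sWordConj_mono _ u (rep.sum_le_p hL sa hu _)
    _ ≤ rep.p A := rep.cylinder_le hL sa hA u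

end Ring

lemma cylinder_ne_zero [NonUnitalNormedRing B] [StarRing B] [CStarRing B] (rep : LRep G L B)
    (hL : Function.Surjective L) (hp : ∀ C : Set V, Bbar G L C → C.Nonempty → rep.p C ≠ 0)
    {A : Set V} (hA : Bbar G L A) {w : List 𝒜} (hw : (relRng' G L A w).Nonempty) :
    rep.cylinder A w ≠ 0 := by
  have hC := bbar_relRng' hL hA w
  rw [← rep.sWordMul_p_mul_star hL hA, ne_eq, CStarRing.mul_star_self_eq_zero_iff]
  intro h0
  have := rep.star_sWordMul_mul_sWordMul hL hC hA w subset_rfl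
  rw [h0, star_zero, zero_mul] at this
  exact hp _ hC hw this.symm

variable [NonUnitalCStarAlgebra B] [PartialOrder B] [StarOrderedRing B] (rep : LRep G L B)

lemma relRng'_eq_of_subset (hL : Function.Surjective L) (sa : StandingAssumptions G L)
    (hp : ∀ C : Set V, Bbar G L C → C.Nonempty → rep.p C ≠ 0) {A : Set V} (hA : Bbar G L A)
    {w : List 𝒜} (hfin : ¬ IsInfiniteProjection B (rep.p (relRng' G L A w)))
    (hsub : A ⊆ relRng' G L A w) : relRng' G L A w = A := by
  have hC := bbar_relRng' hL hA w
  have hle : rep.cylinder A w ≤ rep.p (relRng' G L A w) :=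
    (rep.cylinder_le hL sa hA w).trans (rep.p_mono hA hC hsub)
  have heq := rep.cylinder_eq_p_of_not_isInfiniteProjection hL hA w hfin hle
  exact (rep.subset_of_p_le hp hA hC hsub (heq ▸ rep.cylinder_le hL sa hA w)).antisymm hsub

lemma prefix_of_relRng'_eq (hL : Function.Surjective L) (sa : StandingAssumptions G L)
    (hp : ∀ C : Set V, Bbar G L C → C.Nonempty → rep.p C ≠ 0) {A : Set V} (hA : Bbar G L A)
    (hfin : ¬ IsInfiniteProjection B (rep.p A)) {β : List 𝒜} (hβ : relRng' G L A β = A)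
    {c : List 𝒜} (hc : c.length ≤ β.length) (hcA : (relRng' G L A c).Nonempty) : c <+: β := by
  have hcyl : rep.cylinder A β = rep.p A := by
    have h := rep.cylinder_eq_p_of_not_isInfiniteProjection hL hA β (by rwa [hβ])
      (by rw [hβ]; exact rep.cylinder_le hL sa hA β)
    rwa [hβ] at h
  by_contra hcβ
  have hβc : ¬ β <+: c := fun h => hcβ (h.eq_of_length (le_antisymm h.length_le hc) ▸ h)
  have hsum := rep.cylinder_add_cylinder_le hL sa hA hβc hcβ
  rw [hcyl, add_le_iff_nonpos_right] at hsum
  exact rep.cylinder_ne_zero hL hp hA hcA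
    (le_antisymm hsum (rep.cylinder_nonneg hL hA c))

end LRep

theorem loop_no_infinite_projections_structure_general {V E 𝒜 B : Type*}
    [NonUnitalCStarAlgebra B] [PartialOrder B] [StarOrderedRing B]
    (G : DirGraph V E) (L : E → 𝒜) (hL : Function.Surjective L)
    (sa : StandingAssumptions G L)
    (rep : LRep G L B)
    (hp : ∀ C : Set V, Bbar G L C → C.Nonempty → rep.p C ≠ 0)
    (hfin : ∀ B' : Set V, Bbar G L B' → ¬ IsInfiniteProjection B (rep.p B'))
    (A : Set V) (hA : Bbar G L A) (hadmits : ∃ β : List 𝒜, IsLoop G L A β) :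
    ∃ α : List 𝒜, IsLoop G L A α ∧ A = relRng G L A α ∧
      labelsFromGe G L A 1 =
        {w | ∃ (k : ℕ) (α' : List 𝒜), α' ≠ [] ∧ α' <+: α ∧ w = wordPow α k ++ α'} := by
  obtain ⟨β, ⟨ν, hlab, hsrc, hrng⟩, hsub⟩ := hadmits
  have hβ : β ≠ [] := hlab ▸ by simp [GPath.label, ν.ne]
  have hAβ : relRng' G L A β = A := by
    rw [← relRng'_eq_relRng A hβ] at hsub
    exact rep.relRng'_eq_of_subset hL sa hp hA (hfin _ (bbar_relRng' hL hA β)) hsub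
  refine ⟨β, ⟨⟨ν, hlab, hsrc, hrng⟩, hsub⟩, by rw [← relRng'_eq_relRng A hβ, hAβ], ?_⟩
  ext w
  rw [labelsFromGe_one_eq]
  exact nonempty_relRng'_iff_eq_wordPow_append hβ hAβ ⟨_, hsrc⟩
    (fun c => rep.prefix_of_relRng'_eq hL sa hp hA (hfin A hA) hAβ) w

/-- Proposition 3.6. Let `{s_a, p_A}` be a representation of
`(E, L, 𝔅̄)` in a C*-algebra with `p_C ≠ 0` for all nonempty `C ∈ 𝔅̄` and no
infinite projection `p_B`, `B ∈ 𝔅̄`. If `A ∈ 𝔅̄` admits a loop, then there is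
a loop `α` at `A` with `A = r(A, α)` and
`L(A E^{≥1}) = {α^k α' : k ≥ 0, α'` an initial segment of `α}`. -/
theorem loop_no_infinite_projections_structure {V E 𝒜 B : Type*}
    [Countable V] [Countable E] [Countable 𝒜]
    [NonUnitalCStarAlgebra B] [PartialOrder B] [StarOrderedRing B]
    (G : DirGraph V E) (L : E → 𝒜) (hL : Function.Surjective L)
    (sa : StandingAssumptions G L)
    (rep : LRep G L B)
    (hp : ∀ C : Set V, Bbar G L C → C.Nonempty → rep.p C ≠ 0)
    (hfin : ∀ B' : Set V, Bbar G L B' → ¬ IsInfiniteProjection B (rep.p B'))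
    (A : Set V) (hA : Bbar G L A) (hadmits : ∃ β : List 𝒜, IsLoop G L A β) :
    ∃ α : List 𝒜, IsLoop G L A α ∧ A = relRng G L A α ∧
      labelsFromGe G L A 1 =
        {w | ∃ (k : ℕ) (α' : List 𝒜), α' ≠ [] ∧ α' <+: α ∧ w = wordPow α k ++ α'} :=
  loop_no_infinite_projections_structure_general G L hL sa rep hp hfin A hA hadmits

end
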